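/- arXiv:2112.14451 — 2 statements merged into one kernel-verified Lean document; each statement's English description precedes it below -/
import Mathlib

section
/- Let ξ be a positive integrable random variable whose CDF F_ξ is continuous and strictly increasing on (0,∞), and let X be a lower-bounded random variable with quantile function G_X such that E[ξ · G_X(1 − F_ξ(ξ))] < ∞. Then E[ξ · G_X(1 − F_ξ(ξ))] = E[ξ X] holds if and only if X = G_X(1 − F_ξ(ξ)) almost surely. -/
/-!
Write `U = F_ξ(ξ)` and `P = G_X(1 - U)`. As `F_ξ` is continuous and strictly increasing, `U` is
uniform on `(0, 1)`, so `P` has the law of `X`, and `P` is a decreasing function of `ξ`. After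
shifting `X` and `P` by a common lower bound, the layer-cake formula gives
`E[ξ X] = ∫_{t > 0} E[ξ; X > t] dt`, and likewise for `P`. For each level `t` the event `{P > t}`
has the probability of `{X > t}` and consists of the outcomes where `ξ` is smallest, so by the
bathtub principle `E[ξ; P > t] ≤ E[ξ; X > t]`; since `ξ` has no atoms, equality forces
`{P > t} = {X > t}` almost surely. Equal expectations thus give equality for almost every `t`,
by right continuity in `t` for every `t`, and hence `X = P` almost surely.
-/

open MeasureTheory ProbabilityTheory Set
open scoped ENNReal NNReal Classical

noncomputable section

/-- Quantile function `G_Y(z) = inf {y | F_Y(y) > z}` of `Y` under `μ`. -/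
def qf {Ω : Type*} [MeasurableSpace Ω] (μ : Measure Ω) (Y : Ω → ℝ) (z : ℝ) : ℝ :=
  sInf {y : ℝ | z < (μ {ω | Y ω ≤ y}).toReal}

/-- CDF `F_Y(y) = P(Y ≤ y)` of `Y` under `μ`. -/
def cdfOf {Ω : Type*} [MeasurableSpace Ω] (μ : Measure Ω) (Y : Ω → ℝ) (y : ℝ) : ℝ :=
  (μ {ω | Y ω ≤ y}).toReal

/-- Extended expectation of a real random variable, valued in `EReal`. -/
def expER {Ω : Type*} [MeasurableSpace Ω] (μ : Measure Ω) (f : Ω → ℝ) : EReal :=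
  ((∫⁻ ω, ENNReal.ofReal (f ω) ∂μ : ℝ≥0∞) : EReal)
    - ((∫⁻ ω, ENNReal.ofReal (-f ω) ∂μ : ℝ≥0∞) : EReal)

open Filter Topology

section

variable {Ω : Type*} [MeasurableSpace Ω]

section Cdf

variable {μ : Measure Ω} {Y : Ω → ℝ}

lemma monotone_cdfOf [IsFiniteMeasure μ] : Monotone (cdfOf μ Y) := fun _ _ hxy =>
  ENNReal.toReal_mono (measure_ne_top μ _) (measure_mono fun _ h => le_trans h hxy)

lemma cdfOf_nonneg (y : ℝ) : 0 ≤ cdfOf μ Y y := ENNReal.toReal_nonneg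

lemma cdfOf_eq_zero {y : ℝ} (hY : ∀ ω, y < Y ω) : cdfOf μ Y y = 0 := by
  have : {ω | Y ω ≤ y} = ∅ := by
    ext ω; simpa using hY ω
  simp [cdfOf, this]

variable [IsProbabilityMeasure μ]

lemma cdfOf_eq_cdf_map (hY : Measurable Y) : cdfOf μ Y = cdf (μ.map Y) := by
  have := Measure.isProbabilityMeasure_map (μ := μ) hY.aemeasurable
  ext y
  rw [cdf_eq_real, measureReal_def, Measure.map_apply hY measurableSet_Iic]
  rfl

lemma cdfOf_le_one (y : ℝ) : cdfOf μ Y y ≤ 1 :=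
  ENNReal.toReal_le_of_le_ofReal zero_le_one (by simpa using prob_le_one)

lemma measure_le_eq_ofReal_cdfOf (y : ℝ) : μ {ω | Y ω ≤ y} = ENNReal.ofReal (cdfOf μ Y y) :=
  (ENNReal.ofReal_toReal (measure_ne_top μ _)).symm

lemma measure_lt_eq_ofReal_one_sub_cdfOf (hY : Measurable Y) (y : ℝ) :
    μ {ω | y < Y ω} = ENNReal.ofReal (1 - cdfOf μ Y y) := by
  have : {ω | y < Y ω} = {ω | Y ω ≤ y}ᶜ := by ext; simp
  rw [this, prob_compl_eq_one_sub (measurableSet_le hY measurable_const),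
    measure_le_eq_ofReal_cdfOf, ENNReal.ofReal_sub 1 (cdfOf_nonneg (μ := μ) (Y := Y) y),
    ENNReal.ofReal_one]

lemma measure_eq_zero_of_continuous_cdfOf (hY : Measurable Y) (hF : Continuous (cdfOf μ Y))
    (x : ℝ) : μ {ω | Y ω = x} = 0 := by
  have := Measure.isProbabilityMeasure_map (μ := μ) hY.aemeasurable
  rw [cdfOf_eq_cdf_map hY] at hF
  have h := (cdf (μ.map Y)).measure_singleton x
  rwa [measure_cdf, Measure.map_apply hY (measurableSet_singleton x),
    hF.continuousWithinAt.leftLim_eq, sub_self, ENNReal.ofReal_zero] at h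

end Cdf

section Quantile

variable {μ : Measure Ω} {X : Ω → ℝ} {c z : ℝ}

lemma bddBelow_setOf_lt_cdfOf (hXc : ∀ ω, c ≤ X ω) (hz : 0 ≤ z) :
    BddBelow {y | z < cdfOf μ X y} := by
  refine ⟨c, fun y (hy : z < cdfOf μ X y) => not_lt.mp fun hyc => ?_⟩
  rw [cdfOf_eq_zero fun ω => hyc.trans_le (hXc ω)] at hy
  linarith

lemma qf_le_of_lt_cdfOf (hXc : ∀ ω, c ≤ X ω) (hz : 0 ≤ z) {t : ℝ} (h : z < cdfOf μ X t) :
    qf μ X z ≤ t :=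
  csInf_le (bddBelow_setOf_lt_cdfOf hXc hz) h

variable [IsProbabilityMeasure μ]

lemma nonempty_setOf_lt_cdfOf (hX : Measurable X) (hz : z < 1) :
    {y | z < cdfOf μ X y}.Nonempty := by
  have := Measure.isProbabilityMeasure_map (μ := μ) hX.aemeasurable
  rw [cdfOf_eq_cdf_map hX]
  exact ((tendsto_cdf_atTop _).eventually (eventually_gt_nhds hz)).exists

lemma le_cdfOf_of_qf_le (hX : Measurable X) (hXc : ∀ ω, c ≤ X ω) (hz0 : 0 ≤ z) (hz1 : z < 1)
    {t : ℝ} (h : qf μ X z ≤ t) : z ≤ cdfOf μ X t := by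
  have hright : Tendsto (cdfOf μ X) (𝓝[>] t) (𝓝 (cdfOf μ X t)) := by
    rw [cdfOf_eq_cdf_map hX]
    exact ((cdf (μ.map X)).right_continuous t).mono Ioi_subset_Ici_self
  refine ge_of_tendsto hright (eventually_nhdsWithin_of_forall fun y (hy : t < y) => ?_)
  obtain ⟨y', hy', hy'y⟩ := (csInf_lt_iff (bddBelow_setOf_lt_cdfOf hXc hz0)
    (nonempty_setOf_lt_cdfOf hX hz1)).mp (h.trans_lt hy)
  exact hy'.le.trans (monotone_cdfOf hy'y.le)

lemma le_qf (hX : Measurable X) (hXc : ∀ ω, c ≤ X ω) (hz0 : 0 ≤ z) (hz1 : z < 1) :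
    c ≤ qf μ X z :=
  le_csInf (nonempty_setOf_lt_cdfOf hX hz1) fun y (hy : z < cdfOf μ X y) =>
    not_lt.mp fun hyc => by rw [cdfOf_eq_zero fun ω => hyc.trans_le (hXc ω)] at hy; linarith

-- Outside `[0, 1)` the set defining `qf` is empty or unbounded below, and `sInf` returns `0`.
lemma monotoneOn_qf (hX : Measurable X) (hXc : ∀ ω, c ≤ X ω) : MonotoneOn (qf μ X) (Ico 0 1) :=
  fun _ hz _ hz' hzz' => csInf_le_csInf (bddBelow_setOf_lt_cdfOf hXc hz.1)
    (nonempty_setOf_lt_cdfOf hX hz'.2) fun _ hy => hzz'.trans_lt hy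

end Quantile

lemma continuousWithinAt_Ioi_measure_setOf_lt (ν : Measure Ω) (f : Ω → ℝ) (x : ℝ) :
    ContinuousWithinAt (fun t => ν {ω | t < f ω}) (Ioi x) x := by
  have : (atBot : Filter (Ioi x)).IsCountablyGenerated := by
    rw [← comap_coe_Ioi_nhdsGT x]
    infer_instance
  have hU : {ω | x < f ω} = ⋃ t : Ioi x, {ω | (t : ℝ) < f ω} := by
    ext ω
    simpa using ⟨exists_between, fun ⟨t, hxt, htf⟩ => hxt.trans htf⟩
  rw [ContinuousWithinAt, ← map_coe_Ioi_atBot x, tendsto_map'_iff, hU]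
  exact tendsto_measure_iUnion_atBot fun t t' (h : (t : ℝ) ≤ t') ω (hω : (t' : ℝ) < f ω) =>
    show (t : ℝ) < f ω from h.trans_lt hω

lemma eqOn_Ioi_of_ae_eq_of_continuousWithinAt {α : Type*} [TopologicalSpace α] [T2Space α]
    {f g : ℝ → α} {a : ℝ} (hfg : f =ᵐ[volume.restrict (Ioi a)] g)
    (hf : ∀ x > a, ContinuousWithinAt f (Ioi x) x)
    (hg : ∀ x > a, ContinuousWithinAt g (Ioi x) x) :
    EqOn f g (Ioi a) := by
  intro x (hx : a < x)
  refine tendsto_nhds_unique_of_frequently_eq (hf x hx) (hg x hx) fun hne => ?_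
  obtain ⟨b, hxb, hb⟩ := mem_nhdsGT_iff_exists_Ioo_subset.mp hne
  have hnull : volume (Ioo x b ∩ Ioi a) = 0 := by
    rw [← Measure.restrict_apply' measurableSet_Ioi]
    exact measure_mono_null (fun y hy => hb hy) (ae_iff.mp hfg)
  rw [inter_eq_left.mpr (Ioo_subset_Ioi_self.trans (Ioi_subset_Ioi hx.le)), Real.volume_Ioo,
    ENNReal.ofReal_eq_zero] at hnull
  linarith [mem_Ioi.mp hxb]

lemma ae_eq_of_forall_setOf_lt_ae_eq {μ : Measure Ω} {X Y : Ω → ℝ} {c : ℝ}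
    (hXc : ∀ ω, c ≤ X ω) (hYc : ∀ ω, c ≤ Y ω)
    (h : ∀ r > c, {ω | r < X ω} =ᵐ[μ] {ω | r < Y ω}) : X =ᵐ[μ] Y := by
  have hrat : ∀ᵐ ω ∂μ, ∀ q : ℚ, c < q → ((q : ℝ) < X ω ↔ (q : ℝ) < Y ω) := by
    refine ae_all_iff.mpr fun q => ?_
    by_cases hq : c < q
    · filter_upwards [h q hq] with ω hω using fun _ => iff_of_eq hω
    · exact ae_of_all _ fun _ h => absurd h hq
  filter_upwards [hrat] with ω hω
  rcases lt_trichotomy (X ω) (Y ω) with hlt | heq | hgt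
  · obtain ⟨q, hXq, hqY⟩ := exists_rat_btwn hlt
    exact absurd ((hω q ((hXc ω).trans_lt hXq)).mpr hqY) hXq.not_gt
  · exact heq
  · obtain ⟨q, hYq, hqX⟩ := exists_rat_btwn hgt
    exact absurd ((hω q ((hYc ω).trans_lt hYq)).mp hqX) hYq.not_gt

section Bathtub

variable {μ : Measure Ω} {w : Ω → ℝ≥0∞} {A B : Set Ω} {s : ℝ≥0∞}

lemma mul_measure_sdiff_le_setLIntegral (hAB : MeasurableSet (A \ B))
    (hsB : ∀ ω ∉ B, s ≤ w ω) : s * μ (A \ B) ≤ ∫⁻ ω in A \ B, w ω ∂μ := by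
  rw [← setLIntegral_const]
  exact setLIntegral_mono' hAB fun ω hω => hsB ω hω.2

variable [IsFiniteMeasure μ]

lemma setLIntegral_le_inter_add_mul_sdiff (hA : MeasurableSet A) (hB : MeasurableSet B)
    (hAB : μ A = μ B) (hBs : ∀ ω ∈ B, w ω ≤ s) :
    ∫⁻ ω in B, w ω ∂μ ≤ ∫⁻ ω in A ∩ B, w ω ∂μ + s * μ (A \ B) := by
  rw [← lintegral_inter_add_sdiff w B hA, inter_comm,
    measure_sdiff_symm hA.nullMeasurableSet hB.nullMeasurableSet hAB (measure_ne_top μ _),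
    ← setLIntegral_const]
  exact add_le_add le_rfl (setLIntegral_mono' (hB.diff hA) fun ω hω => hBs ω hω.1)

theorem setLIntegral_le_of_measure_eq (hA : MeasurableSet A) (hB : MeasurableSet B)
    (hAB : μ A = μ B) (hBs : ∀ ω ∈ B, w ω ≤ s) (hsB : ∀ ω ∉ B, s ≤ w ω) :
    ∫⁻ ω in B, w ω ∂μ ≤ ∫⁻ ω in A, w ω ∂μ :=
  calc ∫⁻ ω in B, w ω ∂μ ≤ ∫⁻ ω in A ∩ B, w ω ∂μ + s * μ (A \ B) :=
        setLIntegral_le_inter_add_mul_sdiff hA hB hAB hBs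
    _ ≤ ∫⁻ ω in A ∩ B, w ω ∂μ + ∫⁻ ω in A \ B, w ω ∂μ :=
        add_le_add le_rfl (mul_measure_sdiff_le_setLIntegral (hA.diff hB) hsB)
    _ = ∫⁻ ω in A, w ω ∂μ := lintegral_inter_add_sdiff w A hB

theorem ae_eq_of_setLIntegral_le_of_measure_eq (hw : Measurable w)
    (hatom : ∀ s, μ {ω | w ω = s} = 0) (hA : MeasurableSet A) (hB : MeasurableSet B)
    (hAB : μ A = μ B) (hBs : ∀ ω ∈ B, w ω ≤ s) (hsB : ∀ ω ∉ B, s ≤ w ω)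
    (hle : ∫⁻ ω in A, w ω ∂μ ≤ ∫⁻ ω in B, w ω ∂μ) (hfin : ∫⁻ ω in B, w ω ∂μ ≠ ∞) :
    A =ᵐ[μ] B := by
  have hfin_inter : ∫⁻ ω in A ∩ B, w ω ∂μ ≠ ∞ :=
    ne_top_of_le_ne_top hfin (lintegral_mono_set inter_subset_right)
  have hfin_const : ∫⁻ _ in A \ B, s ∂μ ≠ ∞ := by
    rw [setLIntegral_const]
    exact ne_top_of_le_ne_top hfin <| (mul_measure_sdiff_le_setLIntegral (hA.diff hB) hsB).trans
      ((lintegral_mono_set sdiff_subset).trans hle)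
  have hle_const : ∫⁻ ω in A \ B, w ω ∂μ ≤ ∫⁻ _ in A \ B, s ∂μ := by
    rw [setLIntegral_const, ← ENNReal.add_le_add_iff_left hfin_inter,
      lintegral_inter_add_sdiff w A hB]
    exact hle.trans (setLIntegral_le_inter_add_mul_sdiff hA hB hAB hBs)
  -- Equality in the bathtub inequality pins `w` to the threshold `s` on `A \ B`.
  have hw_eq : (fun _ => s) =ᵐ[μ.restrict (A \ B)] w :=
    ae_eq_of_ae_le_of_lintegral_le
      ((ae_restrict_iff' (hA.diff hB)).mpr (ae_of_all _ fun ω hω => hsB ω hω.2))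
      hfin_const hw.aemeasurable hle_const
  have hnull : μ (A \ B) = 0 :=
    measure_mono_null_ae ((ae_restrict_iff' (hA.diff hB)).mp hw_eq |>.mono
      fun ω h hω => (h hω).symm) (hatom s)
  refine ae_eq_set.mpr ⟨hnull, ?_⟩
  rwa [← measure_sdiff_symm hA.nullMeasurableSet hB.nullMeasurableSet hAB (measure_ne_top μ _)]

end Bathtub

section Rearrangement

variable {μ : Measure Ω}

lemma exists_threshold_of_counterMonotone {α : Type*} {w : α → ℝ≥0∞} {Y : α → ℝ}
    (hanti : ∀ a b, Y b < Y a → w a ≤ w b) (r : ℝ) :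
    ∃ s, (∀ a ∈ {a | r < Y a}, w a ≤ s) ∧ ∀ a ∉ {a | r < Y a}, s ≤ w a :=
  ⟨⨆ a ∈ {a | r < Y a}, w a, fun _ ha => le_biSup w ha,
    fun b hb => iSup₂_le fun a ha => hanti a b ((not_lt.mp hb).trans_lt ha)⟩

lemma lintegral_mul_ofReal_eq_lintegral_withDensity {w : Ω → ℝ≥0∞} (hw : Measurable w)
    {f : Ω → ℝ} (hf : Measurable f) (hf0 : ∀ ω, 0 ≤ f ω) :
    ∫⁻ ω, w ω * ENNReal.ofReal (f ω) ∂μ = ∫⁻ t in Ioi 0, μ.withDensity w {ω | t < f ω} := by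
  rw [← lintegral_eq_lintegral_meas_lt _ (ae_of_all _ hf0) hf.aemeasurable]
  exact (lintegral_withDensity_eq_lintegral_mul μ hw hf.ennreal_ofReal).symm

lemma withDensity_setOf_lt_ne_top {w : Ω → ℝ≥0∞} (hw : Measurable w) {f : Ω → ℝ}
    (hf : Measurable f) (hfin : ∫⁻ ω, w ω * ENNReal.ofReal (f ω) ∂μ ≠ ∞) {r : ℝ} (hr : 0 < r) :
    μ.withDensity w {ω | r < f ω} ≠ ∞ := by
  have hfin' : ∫⁻ ω, ENNReal.ofReal (f ω) ∂μ.withDensity w ≠ ∞ := by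
    rwa [lintegral_withDensity_eq_lintegral_mul μ hw hf.ennreal_ofReal]
  refine ne_top_of_le_ne_top (ENNReal.div_ne_top hfin' (ENNReal.ofReal_pos.mpr hr).ne') ?_
  exact (measure_mono fun ω (hω : r < f ω) => ENNReal.ofReal_le_ofReal hω.le).trans
    (meas_ge_le_lintegral_div hf.ennreal_ofReal.aemeasurable (ENNReal.ofReal_pos.mpr hr).ne'
      ENNReal.ofReal_ne_top)

variable [IsFiniteMeasure μ] {w : Ω → ℝ≥0∞} {X Y : Ω → ℝ}

lemma withDensity_setOf_lt_le_of_counterMonotone (hX : Measurable X) (hY : Measurable Y)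
    (hlaw : ∀ r, μ {ω | r < X ω} = μ {ω | r < Y ω})
    (hanti : ∀ ω ω', Y ω' < Y ω → w ω ≤ w ω') (r : ℝ) :
    μ.withDensity w {ω | r < Y ω} ≤ μ.withDensity w {ω | r < X ω} := by
  obtain ⟨s, hBs, hsB⟩ := exists_threshold_of_counterMonotone hanti r
  rw [withDensity_apply _ (measurableSet_lt measurable_const hY),
    withDensity_apply _ (measurableSet_lt measurable_const hX)]
  exact setLIntegral_le_of_measure_eq (measurableSet_lt measurable_const hX)
    (measurableSet_lt measurable_const hY) (hlaw r) hBs hsB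

theorem ae_eq_of_lintegral_mul_le_of_counterMonotone_of_nonneg (hw : Measurable w)
    (hatom : ∀ s, μ {ω | w ω = s} = 0) (hX : Measurable X) (hY : Measurable Y)
    (hX0 : ∀ ω, 0 ≤ X ω) (hY0 : ∀ ω, 0 ≤ Y ω) (hlaw : ∀ r, μ {ω | r < X ω} = μ {ω | r < Y ω})
    (hanti : ∀ ω ω', Y ω' < Y ω → w ω ≤ w ω')
    (hle : ∫⁻ ω, w ω * ENNReal.ofReal (X ω) ∂μ ≤ ∫⁻ ω, w ω * ENNReal.ofReal (Y ω) ∂μ)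
    (hfin : ∫⁻ ω, w ω * ENNReal.ofReal (Y ω) ∂μ ≠ ∞) :
    X =ᵐ[μ] Y := by
  set ν := μ.withDensity w
  have hae : (fun t => ν {ω | t < Y ω}) =ᵐ[volume.restrict (Ioi 0)] fun t => ν {ω | t < X ω} :=
    ae_eq_of_ae_le_of_lintegral_le
      (ae_of_all _ (withDensity_setOf_lt_le_of_counterMonotone hX hY hlaw hanti))
      (by rwa [← lintegral_mul_ofReal_eq_lintegral_withDensity hw hY hY0])
      (Antitone.measurable (f := fun t => ν {ω | t < X ω}) fun _ _ h =>
        measure_mono fun _ hω => h.trans_lt hω).aemeasurable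
      (by rwa [← lintegral_mul_ofReal_eq_lintegral_withDensity hw hY hY0,
        ← lintegral_mul_ofReal_eq_lintegral_withDensity hw hX hX0])
  have hlevel : EqOn (fun t => ν {ω | t < Y ω}) (fun t => ν {ω | t < X ω}) (Ioi 0) :=
    eqOn_Ioi_of_ae_eq_of_continuousWithinAt hae
      (fun x _ => continuousWithinAt_Ioi_measure_setOf_lt ν Y x)
      fun x _ => continuousWithinAt_Ioi_measure_setOf_lt ν X x
  refine ae_eq_of_forall_setOf_lt_ae_eq hX0 hY0 fun r hr => ?_
  obtain ⟨s, hBs, hsB⟩ := exists_threshold_of_counterMonotone hanti r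
  have hXr : MeasurableSet {ω | r < X ω} := measurableSet_lt measurable_const hX
  have hYr : MeasurableSet {ω | r < Y ω} := measurableSet_lt measurable_const hY
  refine ae_eq_of_setLIntegral_le_of_measure_eq hw hatom hXr hYr (hlaw r) hBs hsB ?_ ?_
  · rw [← withDensity_apply _ hXr, ← withDensity_apply _ hYr]
    exact (hlevel hr).ge
  · rw [← withDensity_apply _ hYr]
    exact withDensity_setOf_lt_ne_top hw hY hfin hr

theorem ae_eq_of_lintegral_mul_le_of_counterMonotone (hw : Measurable w)
    (hatom : ∀ s, μ {ω | w ω = s} = 0) (hX : Measurable X) (hY : Measurable Y) {c : ℝ}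
    (hXc : ∀ ω, c ≤ X ω) (hYc : ∀ ω, c ≤ Y ω) (hlaw : ∀ r, μ {ω | r < X ω} = μ {ω | r < Y ω})
    (hanti : ∀ ω ω', Y ω' < Y ω → w ω ≤ w ω')
    (hle : ∫⁻ ω, w ω * ENNReal.ofReal (X ω - c) ∂μ ≤ ∫⁻ ω, w ω * ENNReal.ofReal (Y ω - c) ∂μ)
    (hfin : ∫⁻ ω, w ω * ENNReal.ofReal (Y ω - c) ∂μ ≠ ∞) :
    X =ᵐ[μ] Y := by
  have hshift := ae_eq_of_lintegral_mul_le_of_counterMonotone_of_nonneg hw hatom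
    (hX.sub_const c) (hY.sub_const c) (fun ω => sub_nonneg.mpr (hXc ω))
    (fun ω => sub_nonneg.mpr (hYc ω))
    (fun r => by simpa only [lt_sub_iff_add_lt] using hlaw (r + c))
    (fun ω ω' h => hanti ω ω' ((sub_lt_sub_iff_right c).mp h)) hle hfin
  filter_upwards [hshift] with ω hω
  linarith [hω]

end Rearrangement

section Expectation

lemma EReal.coe_ennreal_sub_eq_of_add_eq {a b A K : ℝ≥0∞} (hb : b ≠ ∞) (hK : K ≠ ∞)
    (h : A + b = a + K) : (a : EReal) - b = A - K := by
  lift b to ℝ≥0 using hb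
  lift K to ℝ≥0 using hK
  rcases eq_or_ne a ∞ with rfl | ha
  · obtain rfl : A = ∞ := by simpa using h
    simp
  lift a to ℝ≥0 using ha
  lift A to ℝ≥0 using ne_top_of_le_ne_top (by simp) (le_self_add.trans_eq h)
  rw [← ENNReal.coe_add, ← ENNReal.coe_add, ENNReal.coe_inj] at h
  simp only [EReal.coe_nnreal_eq_coe_real, ← EReal.coe_sub, EReal.coe_eq_coe_iff]
  linarith [congrArg ((↑) : ℝ≥0 → ℝ) h, NNReal.coe_add A b, NNReal.coe_add a K]

lemma EReal.coe_ennreal_sub_left_inj {a b K : ℝ≥0∞} (hK : K ≠ ∞) :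
    (a : EReal) - K = b - K ↔ a = b := by
  lift K to ℝ≥0 using hK
  rw [EReal.coe_nnreal_eq_coe_real]
  refine ⟨fun h => ?_, fun h => h ▸ rfl⟩
  simpa [EReal.sub_add_cancel] using congrArg (· + ((K : ℝ) : EReal)) h

lemma EReal.ne_top_of_coe_ennreal_sub_lt_top {a K : ℝ≥0∞} (h : (a : EReal) - K < ⊤)
    (hK : K ≠ ∞) : a ≠ ∞ := by
  rintro rfl
  rw [EReal.coe_ennreal_top, EReal.top_sub (by simpa using hK)] at h
  exact lt_irrefl _ h

variable {μ : Measure Ω}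

lemma expER_eq_lintegral_add_sub {g k : Ω → ℝ} (hg : Measurable g) (hk : Measurable k)
    (hk0 : ∀ ω, 0 ≤ k ω) (hgk : ∀ ω, 0 ≤ g ω + k ω)
    (hkfin : ∫⁻ ω, ENNReal.ofReal (k ω) ∂μ ≠ ∞) :
    expER μ g = ((∫⁻ ω, ENNReal.ofReal (g ω + k ω) ∂μ : ℝ≥0∞) : EReal)
      - ((∫⁻ ω, ENNReal.ofReal (k ω) ∂μ : ℝ≥0∞) : EReal) := by
  have hpointwise : ∀ ω, ENNReal.ofReal (g ω + k ω) + ENNReal.ofReal (-g ω)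
      = ENNReal.ofReal (g ω) + ENNReal.ofReal (k ω) := fun ω => by
    rcases le_total 0 (g ω) with h | h
    · rw [ENNReal.ofReal_of_nonpos (neg_nonpos.mpr h), add_zero, ENNReal.ofReal_add h (hk0 ω)]
    · rw [ENNReal.ofReal_of_nonpos h, zero_add, ← ENNReal.ofReal_add (hgk ω) (neg_nonneg.mpr h)]
      ring_nf
  refine EReal.coe_ennreal_sub_eq_of_add_eq (ne_top_of_le_ne_top hkfin
    (lintegral_mono fun ω => ENNReal.ofReal_le_ofReal (by linarith [hgk ω]))) hkfin ?_
  calc _ = ∫⁻ ω, (ENNReal.ofReal (g ω + k ω) + ENNReal.ofReal (-g ω)) ∂μ :=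
        (lintegral_add_right _ (by fun_prop)).symm
    _ = ∫⁻ ω, (ENNReal.ofReal (g ω) + ENNReal.ofReal (k ω)) ∂μ := lintegral_congr hpointwise
    _ = _ := lintegral_add_right _ (by fun_prop)

lemma expER_mul_eq_lintegral_sub {ξ f : Ω → ℝ} {c : ℝ} (hξ : Measurable ξ)
    (hξ0 : ∀ ω, 0 ≤ ξ ω) (hξint : Integrable ξ μ) (hf : Measurable f) (hc : c ≤ 0)
    (hfc : ∀ ω, c ≤ f ω) :
    expER μ (fun ω => ξ ω * f ω) =
      ((∫⁻ ω, ENNReal.ofReal (ξ ω) * ENNReal.ofReal (f ω - c) ∂μ : ℝ≥0∞) : EReal)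
        - ((∫⁻ ω, ENNReal.ofReal (ξ ω * -c) ∂μ : ℝ≥0∞) : EReal) := by
  rw [expER_eq_lintegral_add_sub (g := fun ω => ξ ω * f ω) (k := fun ω => ξ ω * -c)
    (hξ.mul hf) (hξ.mul_const _) (fun ω => mul_nonneg (hξ0 ω) (neg_nonneg.mpr hc))
    (fun ω => by nlinarith [hξ0 ω, hfc ω]) (hξint.mul_const _).lintegral_lt_top.ne]
  congr 3
  ext ω
  rw [← ENNReal.ofReal_mul (hξ0 ω)]
  ring_nf

end Expectation

lemma AntitoneOn.measurable_comp {s : Set ℝ} {φ : ℝ → ℝ} (hs : s.OrdConnected)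
    (hφ : AntitoneOn φ s) {f : Ω → ℝ} (hf : Measurable f) (hfs : ∀ ω, f ω ∈ s) :
    Measurable fun ω => φ (f ω) := by
  refine measurable_of_Ioi fun r => ?_
  have hpre : (fun ω => φ (f ω)) ⁻¹' Ioi r = f ⁻¹' (s ∩ φ ⁻¹' Ioi r) := by
    ext ω; simp [hfs ω]
  have hconn : (s ∩ φ ⁻¹' Ioi r).OrdConnected :=
    ⟨fun _ hx _ hy _ hz => ⟨hs.out hx.1 hy.1 hz, hy.2.trans_le (hφ (hs.out hx.1 hy.1 hz) hy.1 hz.2)⟩⟩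
  rw [hpre]
  exact hf hconn.measurableSet

section ProbabilityIntegralTransform

variable {μ : Measure Ω} {ξ : Ω → ℝ}

lemma cdfOf_pos (hFmono : StrictMonoOn (cdfOf μ ξ) (Ioi 0)) {x : ℝ} (hx : 0 < x) :
    0 < cdfOf μ ξ x :=
  (cdfOf_nonneg _).trans_lt (hFmono (half_pos hx) hx (half_lt_self hx))

variable [IsProbabilityMeasure μ]

lemma measure_ofReal_comp_eq (hξm : Measurable ξ) (hξ0 : ∀ ω, 0 ≤ ξ ω)
    (hFcont : Continuous (cdfOf μ ξ)) (s : ℝ≥0∞) : μ {ω | ENNReal.ofReal (ξ ω) = s} = 0 :=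
  measure_mono_null (fun ω (hω : ENNReal.ofReal (ξ ω) = s) =>
      show ξ ω = s.toReal by rw [← hω, ENNReal.toReal_ofReal (hξ0 ω)])
    (measure_eq_zero_of_continuous_cdfOf hξm hFcont s.toReal)

lemma measure_cdfOf_comp_eq (hξm : Measurable ξ) (hξpos : ∀ ω, 0 < ξ ω)
    (hFcont : Continuous (cdfOf μ ξ)) (hFmono : StrictMonoOn (cdfOf μ ξ) (Ioi 0)) (a : ℝ) :
    μ {ω | cdfOf μ ξ (ξ ω) = a} = 0 := by
  by_cases ha : ∃ ω₀, cdfOf μ ξ (ξ ω₀) = a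
  · obtain ⟨ω₀, rfl⟩ := ha
    exact measure_mono_null (fun ω hω => hFmono.injOn (hξpos ω) (hξpos ω₀) hω)
      (measure_eq_zero_of_continuous_cdfOf hξm hFcont (ξ ω₀))
  · simp [not_exists.mp ha]

lemma measure_cdfOf_comp_le (hξm : Measurable ξ) (hξpos : ∀ ω, 0 < ξ ω)
    (hFcont : Continuous (cdfOf μ ξ)) (hFmono : StrictMonoOn (cdfOf μ ξ) (Ioi 0)) {a : ℝ}
    (ha : a ∈ Icc 0 1) : μ {ω | cdfOf μ ξ (ξ ω) ≤ a} = ENNReal.ofReal a := by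
  rcases ha.1.eq_or_lt with rfl | ha0
  · simp [fun ω => (cdfOf_pos hFmono (hξpos ω)).not_ge]
  rcases ha.2.eq_or_lt with rfl | ha1
  · simp [cdfOf_le_one]
  obtain ⟨b, hb⟩ : ∃ b, a < cdfOf μ ξ b := by
    rw [cdfOf_eq_cdf_map hξm]
    exact ((tendsto_cdf_atTop _).eventually (eventually_gt_nhds ha1)).exists
  obtain ⟨s, rfl⟩ : a ∈ range (cdfOf μ ξ) := intermediate_value_univ 0 b hFcont
    ⟨(cdfOf_eq_zero (hξpos ·)).le.trans ha0.le, hb.le⟩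
  have hs : 0 < s := not_le.mp fun hs => ha0.ne' (cdfOf_eq_zero fun ω => hs.trans_lt (hξpos ω))
  have hset : {ω | cdfOf μ ξ (ξ ω) ≤ cdfOf μ ξ s} = {ω | ξ ω ≤ s} := by
    ext ω; exact hFmono.le_iff_le (hξpos ω) hs
  rw [hset, measure_le_eq_ofReal_cdfOf]

end ProbabilityIntegralTransform

section CounterMonotoneQuantile

variable {μ : Measure Ω} [IsProbabilityMeasure μ] {ξ X : Ω → ℝ} {c : ℝ}

lemma one_sub_cdfOf_mem_Ico (hFmono : StrictMonoOn (cdfOf μ ξ) (Ioi 0)) {x : ℝ} (hx : 0 < x) :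
    1 - cdfOf μ ξ x ∈ Ico 0 1 :=
  ⟨sub_nonneg.mpr (cdfOf_le_one x), sub_lt_self 1 (cdfOf_pos hFmono hx)⟩

lemma antitoneOn_qf_one_sub_cdfOf (hFmono : StrictMonoOn (cdfOf μ ξ) (Ioi 0))
    (hX : Measurable X) (hXc : ∀ ω, c ≤ X ω) :
    AntitoneOn (fun x => qf μ X (1 - cdfOf μ ξ x)) (Ioi 0) := fun _ hx _ hy hxy =>
  monotoneOn_qf hX hXc (one_sub_cdfOf_mem_Ico hFmono hy) (one_sub_cdfOf_mem_Ico hFmono hx)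
    (sub_le_sub_left (monotone_cdfOf hxy) 1)

lemma measurable_qf_one_sub_cdfOf (hξm : Measurable ξ) (hξpos : ∀ ω, 0 < ξ ω)
    (hFmono : StrictMonoOn (cdfOf μ ξ) (Ioi 0)) (hX : Measurable X) (hXc : ∀ ω, c ≤ X ω) :
    Measurable fun ω => qf μ X (1 - cdfOf μ ξ (ξ ω)) :=
  (antitoneOn_qf_one_sub_cdfOf hFmono hX hXc).measurable_comp ordConnected_Ioi hξm hξpos

lemma le_qf_one_sub_cdfOf (hξpos : ∀ ω, 0 < ξ ω) (hFmono : StrictMonoOn (cdfOf μ ξ) (Ioi 0))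
    (hX : Measurable X) (hXc : ∀ ω, c ≤ X ω) (ω : Ω) : c ≤ qf μ X (1 - cdfOf μ ξ (ξ ω)) :=
  le_qf hX hXc (one_sub_cdfOf_mem_Ico hFmono (hξpos ω)).1
    (one_sub_cdfOf_mem_Ico hFmono (hξpos ω)).2

lemma le_of_qf_one_sub_cdfOf_lt (hξpos : ∀ ω, 0 < ξ ω)
    (hFmono : StrictMonoOn (cdfOf μ ξ) (Ioi 0)) (hX : Measurable X) (hXc : ∀ ω, c ≤ X ω)
    {ω ω' : Ω} (h : qf μ X (1 - cdfOf μ ξ (ξ ω')) < qf μ X (1 - cdfOf μ ξ (ξ ω))) :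
    ξ ω ≤ ξ ω' :=
  not_lt.mp fun h' =>
    h.not_ge (antitoneOn_qf_one_sub_cdfOf hFmono hX hXc (hξpos ω') (hξpos ω) h'.le)

lemma measure_lt_qf_one_sub_cdfOf (hξm : Measurable ξ) (hξpos : ∀ ω, 0 < ξ ω)
    (hFcont : Continuous (cdfOf μ ξ)) (hFmono : StrictMonoOn (cdfOf μ ξ) (Ioi 0))
    (hX : Measurable X) (hXc : ∀ ω, c ≤ X ω) (r : ℝ) :
    μ {ω | r < X ω} = μ {ω | r < qf μ X (1 - cdfOf μ ξ (ξ ω))} := by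
  set a := 1 - cdfOf μ X r
  have ha : a ∈ Icc 0 1 :=
    ⟨sub_nonneg.mpr (cdfOf_le_one (μ := μ) r), sub_le_self 1 (cdfOf_nonneg (μ := μ) r)⟩
  have hlower : {ω | cdfOf μ ξ (ξ ω) < a} ⊆ {ω | r < qf μ X (1 - cdfOf μ ξ (ξ ω))} :=
    fun ω (hω : cdfOf μ ξ (ξ ω) < a) => not_le.mp fun (hle : qf μ X _ ≤ r) => by
      have hz := one_sub_cdfOf_mem_Ico (μ := μ) hFmono (hξpos ω)
      linarith [le_cdfOf_of_qf_le hX hXc hz.1 hz.2 hle]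
  have hupper : {ω | r < qf μ X (1 - cdfOf μ ξ (ξ ω))} ⊆ {ω | cdfOf μ ξ (ξ ω) ≤ a} :=
    fun ω (hω : r < qf μ X _) => not_lt.mp fun (hlt : a < cdfOf μ ξ (ξ ω)) => hω.not_ge <|
      qf_le_of_lt_cdfOf hXc (one_sub_cdfOf_mem_Ico hFmono (hξpos ω)).1 (by linarith)
  have hU_le := measure_cdfOf_comp_le hξm hξpos hFcont hFmono ha
  have hU_lt : μ {ω | cdfOf μ ξ (ξ ω) < a} = ENNReal.ofReal a :=
    calc μ {ω | cdfOf μ ξ (ξ ω) < a}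
        = μ ({ω | cdfOf μ ξ (ξ ω) ≤ a} \ {ω | cdfOf μ ξ (ξ ω) = a}) := by
          congr 1; ext ω; exact lt_iff_le_and_ne (α := ℝ)
      _ = ENNReal.ofReal a := by
          rw [measure_sdiff_null (measure_cdfOf_comp_eq hξm hξpos hFcont hFmono a), hU_le]
  rw [measure_lt_eq_ofReal_one_sub_cdfOf hX]
  exact le_antisymm (hU_lt ▸ measure_mono hlower) (hU_le ▸ measure_mono hupper)

end CounterMonotoneQuantile

end

/-- if `E[ξ · G_X(1 − F_ξ(ξ))] < ∞`, then equality
`E[ξ · G_X(1 − F_ξ(ξ))] = E[ξ X]` holds iff `X = G_X(1 − F_ξ(ξ))` almost surely. -/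
theorem quantile_rearrangement_eq_iff
    {Ω : Type*} [MeasurableSpace Ω] (μ : Measure Ω) [IsProbabilityMeasure μ]
    (ξ : Ω → ℝ) (hξm : Measurable ξ) (hξpos : ∀ ω, 0 < ξ ω) (hξint : Integrable ξ μ)
    (hFcont : Continuous (cdfOf μ ξ)) (hFmono : StrictMonoOn (cdfOf μ ξ) (Set.Ioi 0))
    (X : Ω → ℝ) (hXm : Measurable X) (hXlb : ∃ c : ℝ, ∀ ω, c ≤ X ω)
    (hfin : expER μ (fun ω => ξ ω * qf μ X (1 - cdfOf μ ξ (ξ ω))) < ⊤) :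
    expER μ (fun ω => ξ ω * qf μ X (1 - cdfOf μ ξ (ξ ω))) = expER μ (fun ω => ξ ω * X ω)
      ↔ (∀ᵐ ω ∂μ, X ω = qf μ X (1 - cdfOf μ ξ (ξ ω))) := by
  obtain ⟨c₀, hc₀⟩ := hXlb
  -- A nonpositive lower bound makes `ξ * (-c)` a nonnegative integrable compensator in `expER`.
  set c := min c₀ 0
  have hc : c ≤ 0 := min_le_right _ _
  have hXc : ∀ ω, c ≤ X ω := fun ω => (min_le_left _ _).trans (hc₀ ω)
  have hξ0 : ∀ ω, 0 ≤ ξ ω := fun ω => (hξpos ω).le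
  have hPm := measurable_qf_one_sub_cdfOf hξm hξpos hFmono hXm hXc
  have hPc := le_qf_one_sub_cdfOf hξpos hFmono hXm hXc
  have hKfin := (hξint.mul_const (-c)).lintegral_lt_top.ne
  rw [expER_mul_eq_lintegral_sub hξm hξ0 hξint hPm hc hPc] at hfin ⊢
  rw [expER_mul_eq_lintegral_sub hξm hξ0 hξint hXm hc hXc, EReal.coe_ennreal_sub_left_inj hKfin]
  refine ⟨fun h => ?_, fun h => lintegral_congr_ae (h.mono fun ω hω => by simp only [hω])⟩
  exact ae_eq_of_lintegral_mul_le_of_counterMonotone hξm.ennreal_ofReal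
    (measure_ofReal_comp_eq hξm hξ0 hFcont) hXm hPm hXc hPc
    (measure_lt_qf_one_sub_cdfOf hξm hξpos hFcont hFmono hXm hXc)
    (fun ω ω' h => ENNReal.ofReal_le_ofReal (le_of_qf_one_sub_cdfOf_lt hξpos hFmono hXm hXc h))
    h.ge (EReal.ne_top_of_coe_ennreal_sub_lt_top hfin hKfin)

end
end

section
/- Let α ∈ (0,1) and c ∈ (0,1). Let v : [0,1] → [0,1] be continuous and strictly increasing with v(0) = 0, v(1) = 1 and v(c) = α, continuously differentiable and strictly convex on (0,1), and with v'(s) → 0 as s ↓ 0. Define φ(s) = v(s)/α for 0 ≤ s ≤ c and φ(s) = 1 for c < s ≤ 1. Then there exists a unique t₀ ∈ (0, c) such that v'(t₀)/α = (1 − v(t₀)/α)/(1 − t₀), and the convex envelope of φ on [0,1] is δ(s) = v(s)/α for 0 ≤ s ≤ t₀ and δ(s) = v(t₀)/α + (v'(t₀)/α)(s − t₀) for t₀ < s ≤ 1. -/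
/-!
The height at `1` of the tangent line of `v` at `t`, `T t = v t + v' t * (1 - t)`, is strictly
increasing by strict convexity, tends to `0` as `t ↓ 0` and exceeds `α = v c` at `t = c`, so it
equals `α` at exactly one `t ∈ (0, c)`: this is the tangency condition. For such `t`, gluing
`v / α` on `[0, t]` to its tangent line, which supports `v / α` and passes through `(1, 1)`, gives
a convex minorant of `φ`. Any convex minorant `g` of `φ` lies below it: on `[0, t]` because
`φ = v / α` there, and on `[t, 1]` because `g` lies below its chord from `(t, g t)` to `(1, g 1)`,
while `g t ≤ v t / α` and `g 1 ≤ 1`.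
-/

open Set Filter
open scoped Classical

/-- `δ` is the convex envelope of `ψ` on the set `s`: the largest convex function
on `s` that is pointwise dominated by `ψ` on `s`. -/
def IsConvexEnvelopeOn (s : Set ℝ) (ψ δ : ℝ → ℝ) : Prop :=
  ConvexOn ℝ s δ ∧ (∀ t ∈ s, δ t ≤ ψ t) ∧
    ∀ g : ℝ → ℝ, ConvexOn ℝ s g → (∀ t ∈ s, g t ≤ ψ t) → ∀ t ∈ s, g t ≤ δ t

open Topology

theorem ConvexOn.convexOn_closure {E : Type*} [AddCommGroup E] [Module ℝ E] [TopologicalSpace E]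
    [IsTopologicalAddGroup E] [ContinuousSMul ℝ E] {s : Set E} {f : E → ℝ}
    (hf : ConvexOn ℝ s f) (hcont : ContinuousOn f (closure s)) :
    ConvexOn ℝ (closure s) f := by
  refine ⟨hf.1.closure, fun x hx y hy a b ha hb hab => ?_⟩
  have hcomb : ContinuousOn (fun p : E × E => f (a • p.1 + b • p.2)) (closure (s ×ˢ s)) := by
    rw [closure_prod_eq]
    exact hcont.comp (by fun_prop) fun p hp => hf.1.closure hp.1 hp.2 ha hb hab
  have hends : ContinuousOn (fun p : E × E => a • f p.1 + b • f p.2) (closure (s ×ˢ s)) := by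
    rw [closure_prod_eq]
    exact ((hcont.comp continuousOn_fst fun p hp => hp.1).const_smul a).add
      ((hcont.comp continuousOn_snd fun p hp => hp.2).const_smul b)
  exact le_on_closure (fun p hp => hf.2 hp.1 hp.2 ha hb hab) hcomb hends
    (by rw [closure_prod_eq]; exact ⟨hx, hy⟩ : (x, y) ∈ closure (s ×ˢ s))

section Real

variable {S : Set ℝ} {f : ℝ → ℝ}

theorem ConvexOn.add_mul_sub_le_of_hasDerivAt (hf : ConvexOn ℝ S f) {m t x : ℝ} (ht : t ∈ S)
    (hx : x ∈ S) (hderiv : HasDerivAt f m t) : f t + m * (x - t) ≤ f x := by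
  rcases lt_trichotomy x t with hxt | rfl | htx
  · have h := hf.slope_le_of_hasDerivAt hx ht hxt hderiv
    rw [slope_def_field, div_le_iff₀ (sub_pos.2 hxt)] at h
    linarith
  · simp
  · have h := hf.le_slope_of_hasDerivAt ht hx htx hderiv
    rw [slope_def_field, le_div_iff₀ (sub_pos.2 htx)] at h
    linarith

theorem ConvexOn.mul_le_chord (hf : ConvexOn ℝ S f) {x y z : ℝ} (hx : x ∈ S) (hz : z ∈ S)
    (hxy : x ≤ y) (hyz : y ≤ z) : (z - x) * f y ≤ (z - y) * f x + (y - x) * f z := by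
  rcases hxy.eq_or_lt with rfl | hxy
  · simp
  rcases hyz.eq_or_lt with rfl | hyz
  · simp
  have h := hf.slope_mono_adjacent hx hz hxy hyz
  rw [div_le_div_iff₀ (sub_pos.2 hxy) (sub_pos.2 hyz)] at h
  linarith

theorem ConvexOn.ite_affine {a t m : ℝ} (hf : ConvexOn ℝ (Icc a t) f)
    (hslope : ∀ x ∈ Icc a t, f t - f x ≤ m * (t - x)) :
    ConvexOn ℝ (Ici a) (fun x => if x ≤ t then f x else f t + m * (x - t)) := by
  refine convexOn_of_slope_mono_adjacent (convex_Ici a) fun {x y z} hx hz hxy hyz => ?_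
  rcases le_or_gt z t with hzt | htz
  · have hxz := (hxy.trans hyz).le
    simp only [if_pos hzt, if_pos (hyz.le.trans hzt), if_pos (hxz.trans hzt)]
    exact hf.slope_mono_adjacent ⟨hx, hxz.trans hzt⟩ ⟨hx.trans hxz, hzt⟩ hxy hyz
  have hright : (f t + m * (z - t) - (f t + m * (y - t))) / (z - y) = m := by
    field_simp [(sub_pos.2 hyz).ne']
    ring
  rcases le_or_gt y t with hyt | hty
  · have hxt := hxy.le.trans hyt
    simp only [if_pos hyt, if_pos hxt, if_neg (not_le.2 htz)]
    set s := (f y - f x) / (y - x)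
    obtain ⟨hsm, hsy⟩ : s ≤ m ∧ s * (t - y) ≤ f t - f y := by
      rcases hyt.eq_or_lt with rfl | hyt
      · refine ⟨?_, by simp⟩
        rw [div_le_iff₀ (sub_pos.2 hxy)]
        exact hslope x ⟨hx, hxt⟩
      · have hadj := hf.slope_mono_adjacent ⟨hx, hxt⟩ ⟨hx.trans hxt, le_rfl⟩ hxy hyt
        have hyt' := hslope y ⟨hx.trans hxy.le, hyt.le⟩
        rw [le_div_iff₀ (sub_pos.2 hyt)] at hadj
        exact ⟨le_of_mul_le_mul_right (hadj.trans hyt') (sub_pos.2 hyt), hadj⟩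
    rw [le_div_iff₀ (sub_pos.2 hyz)]
    nlinarith [mul_le_mul_of_nonneg_right hsm (sub_pos.2 htz).le]
  · rcases le_or_gt x t with hxt | htx
    · simp only [if_pos hxt, if_neg (not_le.2 hty), if_neg (not_le.2 htz), hright]
      rw [div_le_iff₀ (sub_pos.2 hxy)]
      linarith [hslope x ⟨hx, hxt⟩]
    · simp only [if_neg (not_le.2 htx), if_neg (not_le.2 hty), if_neg (not_le.2 htz), hright]
      rw [div_le_iff₀ (sub_pos.2 hxy)]
      linarith

theorem StrictConvexOn.strictMonoOn_add_mul_sub {f' : ℝ → ℝ} {p : ℝ}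
    (hf : StrictConvexOn ℝ S f) (hderiv : ∀ x ∈ S, HasDerivAt f (f' x) x) :
    StrictMonoOn (fun x => f x + f' x * (p - x)) (S ∩ Iic p) := by
  rintro x ⟨hxS, -⟩ y ⟨hyS, hyp⟩ hxy
  have hleft := hf.lt_slope_of_hasDerivAt hxS hyS hxy (hderiv x hxS)
  have hright := hf.slope_lt_of_hasDerivAt hxS hyS hxy (hderiv y hyS)
  have hderiv_le : f' x * (p - y) ≤ f' y * (p - y) :=
    mul_le_mul_of_nonneg_right (hleft.trans hright).le (sub_nonneg.2 hyp)
  rw [slope_def_field, lt_div_iff₀ (sub_pos.2 hxy)] at hleft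
  dsimp only
  linarith

end Real

theorem StrictMonoOn.existsUnique_eq_of_eventually_lt {T : ℝ → ℝ} {c y : ℝ} (hc : 0 < c)
    (hmono : StrictMonoOn T (Ioc 0 c)) (hcont : ContinuousOn T (Ioc 0 c))
    (hlim : ∀ᶠ x in 𝓝[>] 0, T x < y) (hyc : y < T c) :
    ∃! t, t ∈ Ioo 0 c ∧ T t = y := by
  obtain ⟨ε, hεy, hε⟩ := (hlim.and (Ioo_mem_nhdsGT hc)).exists
  obtain ⟨t, ht, hTt⟩ := intermediate_value_Ioo hε.2.le
    (hcont.mono fun x hx => ⟨hε.1.trans_le hx.1, hx.2⟩) ⟨hεy, hyc⟩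
  refine ⟨t, ⟨⟨hε.1.trans ht.1, ht.2⟩, hTt⟩, fun s ⟨hs, hTs⟩ => ?_⟩
  exact hmono.injOn ⟨hs.1, hs.2.le⟩ ⟨hε.1.trans ht.1, ht.2.le⟩ (hTs.trans hTt.symm)

theorem existsUnique_mem_Ioo_add_mul_one_sub_eq {v v' : ℝ → ℝ} {c : ℝ} (hc : c ∈ Ioo 0 1)
    (hvc : ContinuousOn v (Icc 0 1)) (hv : ConvexOn ℝ (Icc 0 1) v)
    (hconv : StrictConvexOn ℝ (Ioo 0 1) v)
    (hdiff : ∀ s ∈ Ioo (0 : ℝ) 1, HasDerivAt v (v' s) s)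
    (hv'cont : ContinuousOn v' (Ioo 0 1)) (hv0 : v 0 = 0) (hvc_pos : 0 < v c)
    (hlim0 : Tendsto v' (𝓝[>] 0) (𝓝 0)) :
    ∃! t, t ∈ Ioo 0 c ∧ v t + v' t * (1 - t) = v c := by
  obtain ⟨hc0, hc1⟩ := hc
  have hIoc : Ioc 0 c ⊆ Ioo (0 : ℝ) 1 := fun x hx => ⟨hx.1, hx.2.trans_lt hc1⟩
  have hv'c : 0 < v' c := by
    have h := hv.slope_le_of_hasDerivAt ⟨le_rfl, zero_le_one⟩ ⟨hc0.le, hc1.le⟩ hc0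
      (hdiff c ⟨hc0, hc1⟩)
    rw [slope_def_field, hv0, sub_zero, sub_zero] at h
    exact (div_pos hvc_pos hc0).trans_le h
  have hv_lim : Tendsto v (𝓝[>] 0) (𝓝 0) := by
    simpa only [hv0] using
      ((hvc 0 ⟨le_rfl, zero_le_one⟩).mono_of_mem_nhdsWithin (Icc_mem_nhdsGT one_pos)).tendsto
  have hT_lim : Tendsto (fun x => v x + v' x * (1 - x)) (𝓝[>] 0) (𝓝 0) := by
    simpa using hv_lim.add (hlim0.mul ((tendsto_const_nhds.sub tendsto_id).mono_left
      nhdsWithin_le_nhds : Tendsto (fun x : ℝ => 1 - x) (𝓝[>] 0) (𝓝 (1 - 0))))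
  refine ((hconv.strictMonoOn_add_mul_sub hdiff).mono fun x hx => ⟨hIoc hx, (hIoc hx).2.le⟩)
    |>.existsUnique_eq_of_eventually_lt hc0 ?_ (hT_lim.eventually_lt_const hvc_pos) ?_
  · exact (hvc.mono fun x hx => Ioo_subset_Icc_self (hIoc hx)).add
      ((hv'cont.mono hIoc).mul (continuousOn_const.sub continuousOn_id))
  · exact lt_add_of_pos_right _ (mul_pos hv'c (sub_pos.2 hc1))

theorem isConvexEnvelopeOn_ite_tangent {u : ℝ → ℝ} {c t m : ℝ}
    (hu : ConvexOn ℝ (Icc 0 1) u)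
    (ht : 0 < t) (htc : t ≤ c) (hc : c < 1) (hderiv : HasDerivAt u m t) (hut : u t ≤ 1)
    (htangent : u t + m * (1 - t) = 1) :
    IsConvexEnvelopeOn (Icc 0 1) (fun s => if s ≤ c then u s else 1)
      (fun s => if s ≤ t then u s else u t + m * (s - t)) := by
  have ht1 : t ∈ Icc (0 : ℝ) 1 := ⟨ht.le, by linarith⟩
  have h1 : (1 : ℝ) ∈ Icc (0 : ℝ) 1 := ⟨zero_le_one, le_rfl⟩
  have htangent_le : ∀ s ∈ Icc (0 : ℝ) 1, u t + m * (s - t) ≤ u s :=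
    fun s hs => hu.add_mul_sub_le_of_hasDerivAt ht1 hs hderiv
  have hm : 0 ≤ m := by nlinarith
  refine ⟨?_, fun s hs => ?_, fun g hg hgψ s hs => ?_⟩
  · refine ((hu.subset (Icc_subset_Icc_right ht1.2) (convex_Icc 0 t)).ite_affine
      fun x hx => ?_).subset Icc_subset_Ici_self (convex_Icc 0 1)
    linarith [htangent_le x ⟨hx.1, hx.2.trans ht1.2⟩]
  · dsimp only
    split_ifs with hst hsc hsc
    · exact le_rfl
    · exact absurd (hst.trans htc) hsc
    · exact htangent_le s hs
    · nlinarith [hs.2]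
  · dsimp only
    split_ifs with hst
    · simpa [if_pos (hst.trans htc)] using hgψ s hs
    have hgt : g t ≤ u t := by simpa [if_pos htc] using hgψ t ht1
    have hg1 : g 1 ≤ 1 := by simpa [if_neg (not_le.2 hc)] using hgψ 1 h1
    refine le_of_mul_le_mul_left ?_ (sub_pos.2 (htc.trans_lt hc))
    calc (1 - t) * g s ≤ (1 - s) * g t + (s - t) * g 1 :=
          hg.mul_le_chord ht1 h1 (not_le.1 hst).le hs.2
      _ ≤ (1 - s) * u t + (s - t) * 1 := by
          gcongr
          · linarith [hs.2]
          · linarith [not_le.1 hst]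
      _ = (1 - t) * (u t + m * (s - t)) := by linear_combination (t - s) * htangent

theorem ES_minrisk_convex_envelope_general
    (α c : ℝ) (hα : α ∈ Set.Ioo (0:ℝ) 1) (hc : c ∈ Set.Ioo (0:ℝ) 1)
    (v v' : ℝ → ℝ)
    (hvc : ContinuousOn v (Set.Icc 0 1))
    (hv0 : v 0 = 0) (hvcα : v c = α)
    (hdiff : ∀ s ∈ Set.Ioo (0:ℝ) 1, HasDerivAt v (v' s) s)
    (hv'cont : ContinuousOn v' (Set.Ioo 0 1))
    (hconv : StrictConvexOn ℝ (Set.Ioo 0 1) v)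
    (hlim0 : Tendsto v' (nhdsWithin 0 (Set.Ioi 0)) (nhds 0)) :
    (∃! t : ℝ, t ∈ Set.Ioo 0 c ∧ v' t / α = (1 - v t / α) / (1 - t)) ∧
      ∀ t : ℝ, t ∈ Set.Ioo 0 c → v' t / α = (1 - v t / α) / (1 - t) →
        IsConvexEnvelopeOn (Set.Icc 0 1)
          (fun s => if s ≤ c then v s / α else 1)
          (fun s => if s ≤ t then v s / α else v t / α + v' t / α * (s - t)) := by
  obtain ⟨hα0, -⟩ := hα
  obtain ⟨hc0, hc1⟩ := hc
  have hv : ConvexOn ℝ (Icc 0 1) v := by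
    rw [← closure_Ioo zero_ne_one] at hvc ⊢
    exact hconv.convexOn.convexOn_closure hvc
  have htangent_iff : ∀ t < 1,
      (v' t / α = (1 - v t / α) / (1 - t) ↔ v t + v' t * (1 - t) = α) := by
    intro t ht
    rw [div_eq_div_iff hα0.ne' (sub_pos.2 ht).ne']
    field_simp
    constructor <;> intro h <;> linarith
  refine ⟨?_, fun t ht htan => ?_⟩
  · rw [existsUnique_congr fun t => and_congr_right fun ht => htangent_iff t (ht.2.trans hc1),
      ← hvcα]
    exact existsUnique_mem_Ioo_add_mul_one_sub_eq ⟨hc0, hc1⟩ hvc hv hconv hdiff hv'cont hv0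
      (hvcα ▸ hα0) hlim0
  have hvt : v t ≤ α := by
    have h := hv.le_on_segment (x := 0) (y := c) ⟨le_rfl, zero_le_one⟩ ⟨hc0.le, hc1.le⟩
      (by rw [segment_eq_Icc hc0.le]; exact ⟨ht.1.le, ht.2.le⟩)
    rwa [hv0, hvcα, max_eq_right hα0.le] at h
  refine isConvexEnvelopeOn_ite_tangent ?_ ht.1 ht.2.le hc1
    ((hdiff t ⟨ht.1, ht.2.trans hc1⟩).div_const α) ((div_le_one hα0).2 hvt) ?_
  · simpa only [smul_eq_mul, inv_mul_eq_div] using hv.smul (inv_nonneg.2 hα0.le)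
  · field_simp
    linarith [(htangent_iff t (ht.2.trans hc1)).1 htan]

/-- for the min-ES distorted function `φ(s) = v(s)/α` on `[0,c]`, `1` on
`(c,1]`, there is a unique tangency point `t₀ ∈ (0,c)` with
`v'(t₀)/α = (1 − v(t₀)/α)/(1 − t₀)`, and the convex envelope of `φ` on `[0,1]` equals
`v(s)/α` on `[0,t₀]` and the tangent line `v(t₀)/α + (v'(t₀)/α)(s − t₀)` on `(t₀,1]`. -/
theorem ES_minrisk_convex_envelope
    (α c : ℝ) (hα : α ∈ Set.Ioo (0:ℝ) 1) (hc : c ∈ Set.Ioo (0:ℝ) 1)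
    (v v' : ℝ → ℝ)
    (hvc : ContinuousOn v (Set.Icc 0 1))
    (hvmono : StrictMonoOn v (Set.Icc 0 1))
    (hv0 : v 0 = 0) (hv1 : v 1 = 1) (hvcα : v c = α)
    (hvmaps : Set.MapsTo v (Set.Icc 0 1) (Set.Icc 0 1))
    (hdiff : ∀ s ∈ Set.Ioo (0:ℝ) 1, HasDerivAt v (v' s) s)
    (hv'cont : ContinuousOn v' (Set.Ioo 0 1))
    (hconv : StrictConvexOn ℝ (Set.Ioo 0 1) v)
    (hlim0 : Tendsto v' (nhdsWithin 0 (Set.Ioi 0)) (nhds 0)) :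
    (∃! t : ℝ, t ∈ Set.Ioo 0 c ∧ v' t / α = (1 - v t / α) / (1 - t)) ∧
      ∀ t : ℝ, t ∈ Set.Ioo 0 c → v' t / α = (1 - v t / α) / (1 - t) →
        IsConvexEnvelopeOn (Set.Icc 0 1)
          (fun s => if s ≤ c then v s / α else 1)
          (fun s => if s ≤ t then v s / α else v t / α + v' t / α * (s - t)) :=
  ES_minrisk_convex_envelope_general α c hα hc v v' hvc hv0 hvcα hdiff hv'cont hconv hlim0
end
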